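/- Fix N ≥ 2 and p₀₁, p₁₀ ∈ (0,1). Then every x in the state-action polytope X of the Gilbert–Elliot N-queue model has product-form channel marginals: for each fixed channel vector c ∈ {0,1}^N, the sum Σ_{m=1}^N Σ_{a=1}^N x((m, c), a) equals ∏_{i=1}^N π(c_i), where π(1) = p₀₁/(p₀₁+p₁₀) and π(0) = p₁₀/(p₀₁+p₁₀). In particular, the total mass on states with all channels OFF equals C₀ = (p₁₀/(p₁₀+p₀₁))^N. -/

import Mathlib

open Finset

/-- State of the Gilbert–Elliot `N`-queue model: the server location `m ∈ Fin N` and the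
channel state vector `c : Fin N → Bool` (`true` = ON). -/
abbrev NState (N : ℕ) : Type := Fin N × (Fin N → Bool)

/-- One-step Gilbert–Elliot channel transition: from ON the channel moves to OFF with
probability `p₁₀`, from OFF it moves to ON with probability `p₀₁`. -/
noncomputable def chTrans (p01 p10 : ℝ) (c c' : Bool) : ℝ :=
  if c then (if c' then 1 - p10 else p10) else (if c' then p01 else 1 - p01)

/-- Transition probability of going to state `s'` from state `s` under action `a`:
the next location is `a`, and the channels move independently. -/
noncomputable def NP (N : ℕ) (p01 p10 : ℝ) (s' s : NState N) (a : Fin N) : ℝ :=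
  (if s'.1 = a then (1 : ℝ) else 0) * ∏ i : Fin N, chTrans p01 p10 (s.2 i) (s'.2 i)

/-- The state-action polytope `X`: nonnegative, normalized vectors satisfying the
balance equations. -/
def NX (N : ℕ) (p01 p10 : ℝ) : Set (NState N × Fin N → ℝ) :=
  {x | (∀ sa, 0 ≤ x sa) ∧ (∑ sa : NState N × Fin N, x sa) = 1 ∧
    ∀ s : NState N, (∑ a : Fin N, x (s, a)) =
      ∑ s' : NState N, ∑ a : Fin N, NP N p01 p10 s s' a * x (s', a)}

/-- Rate of queue `i` under `x`: the frequency of staying at queue `i` while its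
channel is ON. -/
noncomputable def Nrate (N : ℕ) (x : NState N × Fin N → ℝ) (i : Fin N) : ℝ :=
  ∑ c : Fin N → Bool, if c i then x ((i, c), i) else 0

/-!
The channel vector evolves as a product of independent two-state chains, whatever the actions,
so the channel marginal `ν c = ∑ m a, x ((m, c), a)` of any `x ∈ X` is a stationary probability
vector of the product chain. With `λ = 1 - p₀₁ - p₁₀` and `φ b = [b] - π(1)`, each
`φ_S c = ∏_{i ∈ S} φ (c i)` is an eigenfunction of the product kernel with eigenvalue `λ^|S|`.
Since `|λ| < 1`, stationarity forces `∑ ν φ_S = 0` for `S ≠ ∅`, and expanding the indicator of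
`c` in the basis `φ_S` leaves only the `S = ∅` term, which is `∏ᵢ π(cᵢ)`.
-/

section ProductChain

variable {ι : Type*} [Fintype ι] {p01 p10 : ℝ}

noncomputable def chStat (p01 p10 : ℝ) (b : Bool) : ℝ :=
  if b then p01 / (p01 + p10) else p10 / (p01 + p10)

noncomputable def chCenter (p01 p10 : ℝ) (b : Bool) : ℝ :=
  (if b then 1 else 0) - p01 / (p01 + p10)

noncomputable def chKernel (p01 p10 : ℝ) (d c : ι → Bool) : ℝ :=
  ∏ i, chTrans p01 p10 (d i) (c i)

lemma sum_chTrans (p01 p10 : ℝ) (b : Bool) : ∑ b', chTrans p01 p10 b b' = 1 := by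
  cases b <;> simp [chTrans]

lemma sum_chTrans_mul_chCenter (h : p01 + p10 ≠ 0) (b : Bool) :
    ∑ b', chTrans p01 p10 b b' * chCenter p01 p10 b' = (1 - p01 - p10) * chCenter p01 p10 b := by
  cases b <;> simp [chTrans, chCenter] <;> field_simp <;> ring

lemma chStat_add_sign_mul_chCenter (h : p01 + p10 ≠ 0) (a b : Bool) :
    chStat p01 p10 a + (if a then 1 else -1) * chCenter p01 p10 b = if b = a then 1 else 0 := by
  cases a <;> cases b <;> simp [chStat, chCenter] <;> field_simp <;> ring

lemma sum_chKernel_mul_prod_chCenter [DecidableEq ι] (h : p01 + p10 ≠ 0) (S : Finset ι)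
    (d : ι → Bool) :
    ∑ c, chKernel p01 p10 d c * ∏ i ∈ S, chCenter p01 p10 (c i) =
      (1 - p01 - p10) ^ S.card * ∏ i ∈ S, chCenter p01 p10 (d i) := by
  have factor (i : ι) :
      ∑ b, chTrans p01 p10 (d i) b * (if i ∈ S then chCenter p01 p10 b else 1) =
        if i ∈ S then (1 - p01 - p10) * chCenter p01 p10 (d i) else 1 := by
    split_ifs
    · exact sum_chTrans_mul_chCenter h (d i)
    · simpa using sum_chTrans p01 p10 (d i)
  calc ∑ c, chKernel p01 p10 d c * ∏ i ∈ S, chCenter p01 p10 (c i)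
      = ∑ c : ι → Bool, ∏ i, chTrans p01 p10 (d i) (c i) *
          (if i ∈ S then chCenter p01 p10 (c i) else 1) := by
        simp only [chKernel, prod_mul_distrib, prod_ite_mem, univ_inter]
    _ = ∏ i, if i ∈ S then (1 - p01 - p10) * chCenter p01 p10 (d i) else 1 := by
        rw [← Fintype.prod_congr _ _ factor, Fintype.prod_sum]
    _ = _ := by rw [prod_ite_mem, univ_inter, prod_mul_distrib, prod_const]

lemma indicator_eq_sum_prod_chCenter [DecidableEq ι] (h : p01 + p10 ≠ 0) (c c' : ι → Bool) :
    (if c' = c then 1 else 0) =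
      ∑ t : Finset ι, ((∏ i ∈ t, if c i then 1 else -1) * ∏ i ∈ t, chCenter p01 p10 (c' i)) *
        ∏ i ∈ tᶜ, chStat p01 p10 (c i) := by
  simp_rw [← prod_mul_distrib, ← Fintype.prod_add, add_comm _ (chStat _ _ _),
    chStat_add_sign_mul_chCenter h, Fintype.prod_boole, funext_iff]

lemma add_ne_zero_of_abs_one_sub_sub_lt (hlam : |1 - p01 - p10| < 1) : p01 + p10 ≠ 0 := by
  intro h0
  simp [sub_sub, h0] at hlam

lemma sum_mul_prod_chCenter_eq_zero [DecidableEq ι] (hlam : |1 - p01 - p10| < 1)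
    {ν : (ι → Bool) → ℝ} (hν : ∀ c, ν c = ∑ c', chKernel p01 p10 c' c * ν c')
    {S : Finset ι} (hS : S.Nonempty) :
    ∑ c, ν c * ∏ i ∈ S, chCenter p01 p10 (c i) = 0 := by
  have h := add_ne_zero_of_abs_one_sub_sub_lt hlam
  have hpow : (1 - p01 - p10) ^ S.card ≠ 1 := by
    intro h1
    have := pow_lt_one₀ (abs_nonneg _) hlam hS.card_pos.ne'
    rw [← abs_pow, h1, abs_one] at this
    exact lt_irrefl 1 this
  have hfixed : (1 - p01 - p10) ^ S.card * ∑ c, ν c * ∏ i ∈ S, chCenter p01 p10 (c i) =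
      ∑ c, ν c * ∏ i ∈ S, chCenter p01 p10 (c i) :=
    calc (1 - p01 - p10) ^ S.card * ∑ c, ν c * ∏ i ∈ S, chCenter p01 p10 (c i)
        = ∑ c', ν c' * ∑ c, chKernel p01 p10 c' c * ∏ i ∈ S, chCenter p01 p10 (c i) := by
          simp_rw [sum_chKernel_mul_prod_chCenter h, mul_sum]
          exact sum_congr rfl fun _ _ => by ring
      _ = ∑ c, (∑ c', chKernel p01 p10 c' c * ν c') * ∏ i ∈ S, chCenter p01 p10 (c i) := by
          simp_rw [mul_sum, sum_mul]
          rw [sum_comm]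
          exact sum_congr rfl fun _ _ => sum_congr rfl fun _ _ => by ring
      _ = _ := by simp_rw [← hν]
  by_contra hne
  exact hpow ((mul_eq_right₀ hne).mp hfixed)

lemma eq_sum_mul_prod_chStat_of_stationary [DecidableEq ι] (hlam : |1 - p01 - p10| < 1)
    {ν : (ι → Bool) → ℝ} (hν : ∀ c, ν c = ∑ c', chKernel p01 p10 c' c * ν c') (c : ι → Bool) :
    ν c = (∑ c', ν c') * ∏ i, chStat p01 p10 (c i) :=
  calc ν c = ∑ c', ν c' * if c' = c then 1 else 0 := by simp
    _ = ∑ t : Finset ι, ((∏ i ∈ t, if c i then 1 else -1) * ∏ i ∈ tᶜ, chStat p01 p10 (c i)) *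
          ∑ c', ν c' * ∏ i ∈ t, chCenter p01 p10 (c' i) := by
        simp_rw [indicator_eq_sum_prod_chCenter (add_ne_zero_of_abs_one_sub_sub_lt hlam), mul_sum]
        rw [sum_comm]
        exact sum_congr rfl fun _ _ => sum_congr rfl fun _ _ => by ring
    _ = _ := by
        rw [sum_eq_single ∅]
        · simp [mul_comm]
        · intro t _ ht
          rw [sum_mul_prod_chCenter_eq_zero hlam hν (nonempty_iff_ne_empty.mpr ht), mul_zero]
        · simp

end ProductChain

section GilbertElliot

variable {N : ℕ} {p01 p10 : ℝ}

def chMarginal (x : NState N × Fin N → ℝ) (c : Fin N → Bool) : ℝ :=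
  ∑ m, ∑ a, x ((m, c), a)

lemma sum_NP_fst (c : Fin N → Bool) (s : NState N) (a : Fin N) :
    ∑ m, NP N p01 p10 (m, c) s a = chKernel p01 p10 s.2 c := by
  simp [NP, chKernel]

lemma chMarginal_stationary {x : NState N × Fin N → ℝ} (hx : x ∈ NX N p01 p10)
    (c : Fin N → Bool) :
    chMarginal x c = ∑ c', chKernel p01 p10 c' c * chMarginal x c' :=
  calc chMarginal x c = ∑ s : NState N, ∑ a, (∑ m, NP N p01 p10 (m, c) s a) * x (s, a) := by
        simp only [chMarginal, hx.2.2, sum_mul]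
        rw [sum_comm]
        exact sum_congr rfl fun _ _ => sum_comm
    _ = ∑ s : NState N, chKernel p01 p10 s.2 c * ∑ a, x (s, a) := by
        simp_rw [sum_NP_fst, mul_sum]
    _ = _ := by
        rw [Fintype.sum_prod_type, sum_comm]
        simp_rw [chMarginal, mul_sum]

lemma sum_chMarginal {x : NState N × Fin N → ℝ} (hx : x ∈ NX N p01 p10) :
    ∑ c, chMarginal x c = 1 := by
  rw [← hx.2.1, Fintype.sum_prod_type, Fintype.sum_prod_type, sum_comm]
  rfl

end GilbertElliot

theorem product_form_channel_marginals_general (N : ℕ) (p01 p10 : ℝ)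
    (h01 : p01 ∈ Set.Ioo (0 : ℝ) 1) (h10 : p10 ∈ Set.Ioo (0 : ℝ) 1) :
    ∀ x ∈ NX N p01 p10,
      (∀ c : Fin N → Bool,
        (∑ m : Fin N, ∑ a : Fin N, x ((m, c), a)) =
          ∏ i : Fin N, (if c i then p01 / (p01 + p10) else p10 / (p01 + p10))) ∧
      (∑ m : Fin N, ∑ a : Fin N, x ((m, fun _ => false), a)) =
        (p10 / (p10 + p01)) ^ N := by
  intro x hx
  have hlam : |1 - p01 - p10| < 1 := by
    rw [abs_lt]
    constructor <;> linarith [h01.1, h01.2, h10.1, h10.2]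
  have hprod (c : Fin N → Bool) : chMarginal x c = ∏ i, chStat p01 p10 (c i) := by
    rw [eq_sum_mul_prod_chStat_of_stationary hlam (chMarginal_stationary hx),
      sum_chMarginal hx, one_mul]
  refine ⟨hprod, ?_⟩
  rw [← chMarginal, hprod]
  simp [chStat, add_comm p10 p01, div_pow]

/-- Product-form channel marginals: for every `x` in the state-action polytope and
every channel vector `c`, the total state-action frequency of states with channel
vector `c` equals `∏ᵢ π(cᵢ)`, where `π(1) = p₀₁/(p₀₁+p₁₀)` and `π(0) = p₁₀/(p₀₁+p₁₀)`.
In particular the total mass on all-OFF states equals `C₀ = (p₁₀/(p₁₀+p₀₁))^N`. -/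
theorem product_form_channel_marginals (N : ℕ) (hN : 2 ≤ N) (p01 p10 : ℝ)
    (h01 : p01 ∈ Set.Ioo (0 : ℝ) 1) (h10 : p10 ∈ Set.Ioo (0 : ℝ) 1) :
    ∀ x ∈ NX N p01 p10,
      (∀ c : Fin N → Bool,
        (∑ m : Fin N, ∑ a : Fin N, x ((m, c), a)) =
          ∏ i : Fin N, (if c i then p01 / (p01 + p10) else p10 / (p01 + p10))) ∧
      (∑ m : Fin N, ∑ a : Fin N, x ((m, fun _ => false), a)) =
        (p10 / (p10 + p01)) ^ N :=
  product_form_channel_marginals_general N p01 p10 h01 h10
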